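/- Let ℓ : Y × ℝ → ℝ satisfy the Lipschitz condition |ℓ(y, a) − ℓ(y, b)| ≤ α|a − b| for all y ∈ Y and a, b ∈ ℝ, and suppose ℓ(y, 0) = 0 for all y. Let F be a class of real-valued functions on a sample x_1,…,x_m with labels y_1,…,y_m, and let H = {(x, y) ↦ ℓ(y, f(x)) : f ∈ F}. Then the empirical Rademacher complexity satisfies R̂(H) ≤ 2α R̂(F). -/

import Mathlib

/-!
Removing the absolute value costs the factor `2`: once the zero function is adjoined to the
class (its loss vanishes since `ℓ y 0 = 0`), both `sup ⟨ε, ℓ ∘ f⟩` and `sup ⟨-ε, ℓ ∘ f⟩` are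
nonnegative, so their sum dominates `sup |⟨ε, ℓ ∘ f⟩|`, and `ε ↦ -ε` preserves the Rademacher
distribution. The signed supremum is then contracted one coordinate at a time
(Ledoux–Talagrand): averaging over the sign `ε j` pairs `sup (A + ψ ∘ u)` with
`sup (A - ψ ∘ u)`, and for `α`-Lipschitz `ψ` this sum only grows when `ψ` is replaced by `α • id`.
-/

/-- A sign vector built from a Boolean choice: the canonical model of a tuple of
independent Rademacher variables. -/
def signVec (m : ℕ) (s : Fin m → Bool) : Fin m → ℝ :=
  fun i => if s i then 1 else -1

/-- Expectation over `m` i.i.d. Rademacher variables (uniform average over all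
`2^m` sign patterns). -/
noncomputable def radE (m : ℕ) (F : (Fin m → ℝ) → ℝ) : ℝ :=
  (∑ s : Fin m → Bool, F (signVec m s)) / 2 ^ m

open Set Function Matrix

section Rademacher

variable {m : ℕ}

lemma signVec_eq_one_or_eq_neg_one (s : Fin m → Bool) (j : Fin m) :
    signVec m s j = 1 ∨ signVec m s j = -1 := by
  unfold signVec; split_ifs <;> simp

lemma signVec_not (s : Fin m → Bool) : signVec m (fun k => !s k) = -signVec m s := by
  funext k; unfold signVec; cases h : s k <;> simp [h]

lemma signVec_update_not (s : Fin m → Bool) (j : Fin m) :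
    signVec m (update s j (!s j)) = update (signVec m s) j (-signVec m s j) := by
  funext k
  rcases eq_or_ne k j with rfl | hk
  · unfold signVec; cases s k <;> simp
  · simp [signVec, update_of_ne hk]

lemma radE_mono {F G : (Fin m → ℝ) → ℝ} (h : ∀ s, F (signVec m s) ≤ G (signVec m s)) :
    radE m F ≤ radE m G :=
  div_le_div_of_nonneg_right (Finset.sum_le_sum fun s _ => h s) (by positivity)

lemma radE_add (F G : (Fin m → ℝ) → ℝ) :
    radE m (fun ε => F ε + G ε) = radE m F + radE m G := by
  simp only [radE, Finset.sum_add_distrib, add_div]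

lemma radE_const_mul (c : ℝ) (F : (Fin m → ℝ) → ℝ) :
    radE m (fun ε => c * F ε) = c * radE m F := by
  simp only [radE, ← Finset.mul_sum, mul_div_assoc]

lemma radE_div_const (F : (Fin m → ℝ) → ℝ) (c : ℝ) :
    radE m (fun ε => F ε / c) = radE m F / c := by
  simp only [radE, ← Finset.sum_div, div_right_comm]

lemma radE_comp_eq_of_bijective (F : (Fin m → ℝ) → ℝ) (g : (Fin m → ℝ) → Fin m → ℝ)
    {σ : (Fin m → Bool) → Fin m → Bool} (hσ : Bijective σ)
    (hg : ∀ s, g (signVec m s) = signVec m (σ s)) :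
    radE m (fun ε => F (g ε)) = radE m F := by
  simp only [radE, hg]
  rw [Fintype.sum_bijective σ hσ (fun s => F (signVec m (σ s))) (fun s => F (signVec m s))
    fun _ => rfl]

lemma radE_comp_neg (F : (Fin m → ℝ) → ℝ) : radE m (fun ε => F (-ε)) = radE m F :=
  radE_comp_eq_of_bijective F _ (σ := fun s k => !s k) (Involutive.bijective fun s => by simp)
    fun s => (signVec_not s).symm

lemma radE_comp_update_neg (F : (Fin m → ℝ) → ℝ) (j : Fin m) :
    radE m (fun ε => F (update ε j (-ε j))) = radE m F :=
  radE_comp_eq_of_bijective F _ (σ := fun s => update s j (!s j))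
    (Involutive.bijective fun s => by simp) fun s => (signVec_update_not s j).symm

lemma update_dotProduct_update (ε w : Fin m → ℝ) (j : Fin m) (a c : ℝ) :
    update ε j a ⬝ᵥ update w j c = ε ⬝ᵥ update w j 0 + a * c := by
  simp only [dotProduct, ← Finset.add_sum_erase _ _ (Finset.mem_univ j), update_self]
  rw [mul_zero, zero_add, add_comm]
  congr 1
  refine Finset.sum_congr rfl fun k hk => ?_
  simp [update_of_ne (Finset.ne_of_mem_erase hk)]

lemma bddAbove_range_dotProduct {S : Type*} {T : S → Fin m → ℝ} {C : Fin m → ℝ}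
    (hC : ∀ t j, |T t j| ≤ C j) (ε : Fin m → ℝ) : BddAbove (range fun t => ε ⬝ᵥ T t) := by
  refine ⟨∑ j, |ε j| * C j, forall_mem_range.2 fun t => ?_⟩
  calc ε ⬝ᵥ T t ≤ ∑ j, |ε j * T t j| := (le_abs_self _).trans (Finset.abs_sum_le_sum_abs _ _)
    _ ≤ ∑ j, |ε j| * C j := Finset.sum_le_sum fun j _ => by
      rw [abs_mul]; exact mul_le_mul_of_nonneg_left (hC t j) (abs_nonneg _)

section Contraction

variable {S : Type*} [Nonempty S] {α : ℝ}

/-- For a pair `t, t'`, the Lipschitz bound on `ψ (u t) - ψ (u t')` is `α * (u t - u t')` or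
`α * (u t' - u t)`, which matches the terms at `(t, t')` or at `(t', t)` on the right. -/
lemma iSup_add_comp_add_iSup_sub_comp_le {A u : S → ℝ} {ψ : ℝ → ℝ}
    (hψ : ∀ a b, |ψ a - ψ b| ≤ α * |a - b|)
    (hadd : BddAbove (range fun t => A t + α * u t))
    (hsub : BddAbove (range fun t => A t - α * u t)) :
    (⨆ t, A t + ψ (u t)) + (⨆ t, A t - ψ (u t)) ≤
      (⨆ t, A t + α * u t) + (⨆ t, A t - α * u t) := by
  refine ciSup_add_ciSup_le fun t t' => ?_
  have hψtt' := (le_abs_self _).trans (hψ (u t) (u t'))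
  rcases le_total (u t') (u t) with h | h
  · rw [abs_of_nonneg (sub_nonneg.2 h)] at hψtt'
    linarith [le_ciSup hadd t, le_ciSup hsub t']
  · rw [abs_of_nonpos (sub_nonpos.2 h)] at hψtt'
    linarith [le_ciSup hadd t', le_ciSup hsub t]

lemma iSup_update_dotProduct_add_iSup_update_neg_le {ψ : ℝ → ℝ}
    (hψ : ∀ a b, |ψ a - ψ b| ≤ α * |a - b|) (v : S → Fin m → ℝ) (u : S → ℝ) (j₀ : Fin m)
    (ε : Fin m → ℝ) {e : ℝ} (he : e = 1 ∨ e = -1)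
    (hbdd : ∀ ε, BddAbove (range fun t => ε ⬝ᵥ update (v t) j₀ (α * u t))) :
    (⨆ t, update ε j₀ e ⬝ᵥ update (v t) j₀ (ψ (u t))) +
        (⨆ t, update ε j₀ (-e) ⬝ᵥ update (v t) j₀ (ψ (u t))) ≤
      (⨆ t, update ε j₀ e ⬝ᵥ update (v t) j₀ (α * u t)) +
        (⨆ t, update ε j₀ (-e) ⬝ᵥ update (v t) j₀ (α * u t)) := by
  have hadd := hbdd (update ε j₀ 1)
  have hsub := hbdd (update ε j₀ (-1))
  simp only [update_dotProduct_update, one_mul, neg_one_mul, ← sub_eq_add_neg] at hadd hsub ⊢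
  rcases he with rfl | rfl
  · simpa only [one_mul, neg_one_mul, ← sub_eq_add_neg] using
      iSup_add_comp_add_iSup_sub_comp_le hψ hadd hsub
  · simp only [neg_neg, one_mul, neg_one_mul, ← sub_eq_add_neg]
    rw [add_comm, add_comm (⨆ t, _ - _)]
    exact iSup_add_comp_add_iSup_sub_comp_le hψ hadd hsub

/-- Pair each sign vector with its flip at `j₀`. -/
lemma radE_iSup_dotProduct_update_le {ψ : ℝ → ℝ} (hψ : ∀ a b, |ψ a - ψ b| ≤ α * |a - b|)
    (v : S → Fin m → ℝ) (u : S → ℝ) (j₀ : Fin m)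
    (hbdd : ∀ ε, BddAbove (range fun t => ε ⬝ᵥ update (v t) j₀ (α * u t))) :
    radE m (fun ε => ⨆ t, ε ⬝ᵥ update (v t) j₀ (ψ (u t))) ≤
      radE m (fun ε => ⨆ t, ε ⬝ᵥ update (v t) j₀ (α * u t)) := by
  have hpair := radE_mono (m := m)
    (F := fun ε => (⨆ t, ε ⬝ᵥ update (v t) j₀ (ψ (u t))) +
      ⨆ t, update ε j₀ (-ε j₀) ⬝ᵥ update (v t) j₀ (ψ (u t)))
    (G := fun ε => (⨆ t, ε ⬝ᵥ update (v t) j₀ (α * u t)) +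
      ⨆ t, update ε j₀ (-ε j₀) ⬝ᵥ update (v t) j₀ (α * u t)) fun s => by
    simpa only [update_eq_self] using iSup_update_dotProduct_add_iSup_update_neg_le hψ v u j₀
      (signVec m s) (signVec_eq_one_or_eq_neg_one s j₀) hbdd
  rw [radE_add, radE_add,
    radE_comp_update_neg (fun ε => ⨆ t, ε ⬝ᵥ update (v t) j₀ (ψ (u t))),
    radE_comp_update_neg (fun ε => ⨆ t, ε ⬝ᵥ update (v t) j₀ (α * u t))] at hpair
  linarith

/-- The Ledoux–Talagrand contraction inequality. -/
theorem radE_iSup_dotProduct_comp_le {φ : Fin m → ℝ → ℝ}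
    (hφ : ∀ j a b, |φ j a - φ j b| ≤ α * |a - b|) (v : S → Fin m → ℝ) {C : Fin m → ℝ}
    (hC : ∀ t j, |v t j| ≤ C j) :
    radE m (fun ε => ⨆ t, ε ⬝ᵥ fun j => φ j (v t j)) ≤ radE m (fun ε => ⨆ t, ε ⬝ᵥ α • v t) := by
  let w (K : Finset (Fin m)) (t : S) (j : Fin m) : ℝ := if j ∈ K then φ j (v t j) else α * v t j
  have hw (K t j) : |w K t j| ≤ |φ j 0| + |α| * C j := by
    have hαC : |α| * |v t j| ≤ |α| * C j := mul_le_mul_of_nonneg_left (hC t j) (abs_nonneg α)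
    by_cases hj : j ∈ K
    · have hlip := (abs_sub_abs_le_abs_sub _ _).trans (hφ j (v t j) 0)
      rw [sub_zero] at hlip
      have hαv := mul_le_mul_of_nonneg_right (le_abs_self α) (abs_nonneg (v t j))
      simp only [w, hj, if_true]
      linarith
    · simp only [w, hj, if_false, abs_mul]
      linarith [abs_nonneg (φ j 0)]
  have hstep (K : Finset (Fin m)) :
      radE m (fun ε => ⨆ t, ε ⬝ᵥ w K t) ≤ radE m (fun ε => ⨆ t, ε ⬝ᵥ w ∅ t) := by
    induction K using Finset.induction_on with
    | empty => exact le_rfl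
    | insert j₀ K hj₀ ih =>
      have hins (t) : w (insert j₀ K) t = update (w K t) j₀ (φ j₀ (v t j₀)) := by
        funext j; rcases eq_or_ne j j₀ with rfl | hj <;> simp [w, *]
      have hK (t) : w K t = update (w K t) j₀ (α * v t j₀) := by
        funext j; rcases eq_or_ne j j₀ with rfl | hj <;> simp [w, *]
      have hcontract := radE_iSup_dotProduct_update_le (hφ j₀) (w K) (fun t => v t j₀) j₀
        fun ε => by simpa only [← hK] using bddAbove_range_dotProduct (hw K) ε
      simp only [← hins, ← hK] at hcontract
      exact hcontract.trans ih
  have huniv (t) : w Finset.univ t = fun j => φ j (v t j) := by funext j; simp [w]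
  have hempty (t) : w ∅ t = α • v t := by funext j; simp [w]
  simpa only [huniv, hempty] using hstep Finset.univ

end Contraction

section AbsoluteValue

variable {ι : Type*}

lemma bddAbove_range_dotProduct_option_elim {T : ι → Fin m → ℝ} {ε : Fin m → ℝ}
    (hT : BddAbove (range fun i => ε ⬝ᵥ T i)) :
    BddAbove (range fun o : Option ι => ε ⬝ᵥ o.elim 0 T) := by
  rw [Option.range_eq]
  exact hT.insert _

/-- Adjoining the zero vector makes both suprema nonnegative, so together they dominate
`|ε ⬝ᵥ T i| = max (ε ⬝ᵥ T i) ((-ε) ⬝ᵥ T i)`. -/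
lemma iSup_abs_dotProduct_le (T : ι → Fin m → ℝ)
    (hT : ∀ ε, BddAbove (range fun i => ε ⬝ᵥ T i)) (ε : Fin m → ℝ) :
    ⨆ i, |ε ⬝ᵥ T i| ≤
      (⨆ o : Option ι, ε ⬝ᵥ o.elim 0 T) + ⨆ o : Option ι, -ε ⬝ᵥ o.elim 0 T := by
  have hpos := le_ciSup (bddAbove_range_dotProduct_option_elim (hT ε))
  have hneg := le_ciSup (bddAbove_range_dotProduct_option_elim (hT (-ε)))
  have hpos0 := hpos none
  have hneg0 := hneg none
  simp only [Option.elim_none, dotProduct_zero] at hpos0 hneg0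
  refine Real.iSup_le (fun i => abs_le'.2 ⟨?_, ?_⟩) (add_nonneg hpos0 hneg0)
  · have hposi := hpos (some i)
    rw [Option.elim_some] at hposi
    linarith
  · have hnegi := hneg (some i)
    rw [Option.elim_some, neg_dotProduct] at hnegi
    linarith

lemma radE_iSup_abs_dotProduct_le (T : ι → Fin m → ℝ)
    (hT : ∀ ε, BddAbove (range fun i => ε ⬝ᵥ T i)) :
    radE m (fun ε => ⨆ i, |ε ⬝ᵥ T i|) ≤
      2 * radE m (fun ε => ⨆ o : Option ι, ε ⬝ᵥ o.elim 0 T) :=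
  calc radE m (fun ε => ⨆ i, |ε ⬝ᵥ T i|)
      ≤ radE m (fun ε =>
          (⨆ o : Option ι, ε ⬝ᵥ o.elim 0 T) + ⨆ o : Option ι, -ε ⬝ᵥ o.elim 0 T) :=
        radE_mono fun s => iSup_abs_dotProduct_le T hT (signVec m s)
    _ = 2 * radE m (fun ε => ⨆ o : Option ι, ε ⬝ᵥ o.elim 0 T) := by
        rw [radE_add, radE_comp_neg (fun ε => ⨆ o : Option ι, ε ⬝ᵥ o.elim 0 T), two_mul]

lemma exists_abs_le_of_bddAbove_abs_dotProduct {T : ι → Fin m → ℝ}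
    (hT : ∀ ε, BddAbove (range fun i => |ε ⬝ᵥ T i|)) :
    ∃ C : Fin m → ℝ, ∀ i j, |T i j| ≤ C j := by
  choose C hC using fun j => hT (Pi.single j 1)
  exact ⟨C, fun i j => by simpa [single_dotProduct] using hC j (mem_range_self i)⟩

theorem radE_iSup_abs_dotProduct_comp_le {φ : Fin m → ℝ → ℝ} {α : ℝ} (hα : 0 ≤ α)
    (hφ : ∀ j a b, |φ j a - φ j b| ≤ α * |a - b|) (hφ0 : ∀ j, φ j 0 = 0) (T : ι → Fin m → ℝ)
    (hT : ∀ ε, BddAbove (range fun i => |ε ⬝ᵥ T i|)) :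
    radE m (fun ε => ⨆ i, |ε ⬝ᵥ fun j => φ j (T i j)|) ≤
      2 * α * radE m (fun ε => ⨆ i, |ε ⬝ᵥ T i|) := by
  obtain ⟨C, hC⟩ := exists_abs_le_of_bddAbove_abs_dotProduct hT
  have hφT (i j) : |φ j (T i j)| ≤ α * C j := by
    have hlip := hφ j (T i j) 0
    rw [hφ0, sub_zero, sub_zero] at hlip
    exact hlip.trans (mul_le_mul_of_nonneg_left (hC i j) hα)
  let v (o : Option ι) : Fin m → ℝ := o.elim 0 T
  have hv (o j) : |v o j| ≤ |C j| := by
    cases o with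
    | none => simp [v]
    | some i => exact (hC i j).trans (le_abs_self _)
  have hφv (o : Option ι) : (o.elim 0 fun i j => φ j (T i j)) = fun j => φ j (v o j) := by
    cases o with
    | none => funext j; simp [v, hφ0]
    | some i => rfl
  have hsup (ε : Fin m → ℝ) : ⨆ o, ε ⬝ᵥ α • v o ≤ α * ⨆ i, |ε ⬝ᵥ T i| := by
    have hsup0 : 0 ≤ α * ⨆ i, |ε ⬝ᵥ T i| :=
      mul_nonneg hα (Real.iSup_nonneg fun _ => abs_nonneg _)
    refine Real.iSup_le (fun o => ?_) hsup0
    cases o with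
    | none => simpa [v] using hsup0
    | some i =>
      rw [dotProduct_smul, smul_eq_mul]
      exact mul_le_mul_of_nonneg_left ((le_abs_self _).trans (le_ciSup (hT ε) i)) hα
  calc radE m (fun ε => ⨆ i, |ε ⬝ᵥ fun j => φ j (T i j)|)
      ≤ 2 * radE m (fun ε => ⨆ o, ε ⬝ᵥ fun j => φ j (v o j)) := by
        simpa only [hφv] using radE_iSup_abs_dotProduct_le _ (bddAbove_range_dotProduct hφT)
    _ ≤ 2 * radE m (fun ε => ⨆ o, ε ⬝ᵥ α • v o) :=
        mul_le_mul_of_nonneg_left (radE_iSup_dotProduct_comp_le hφ v hv) zero_le_two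
    _ ≤ 2 * α * radE m (fun ε => ⨆ i, |ε ⬝ᵥ T i|) := by
        rw [mul_assoc, ← radE_const_mul α]
        refine mul_le_mul_of_nonneg_left (radE_mono fun s => ?_) zero_le_two
        exact hsup _

end AbsoluteValue

end Rademacher

theorem radE_loss_contraction_general {X Y : Type*} {m : ℕ} {ι : Type*}
    (ℓ : Y → ℝ → ℝ) (α : ℝ) (hα : 0 ≤ α)
    (hlip : ∀ (y : Y) (a b : ℝ), |ℓ y a - ℓ y b| ≤ α * |a - b|)
    (h0 : ∀ y : Y, ℓ y 0 = 0)
    (f : ι → X → ℝ) (x : Fin m → X) (y : Fin m → Y)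
    (hb : ∀ ε : Fin m → ℝ,
      BddAbove (Set.range fun i : ι => |∑ j : Fin m, ε j * f i (x j)|)) :
    radE m (fun ε => (⨆ i : ι, |∑ j : Fin m, ε j * ℓ (y j) (f i (x j))|) / m) ≤
      2 * α * radE m (fun ε => (⨆ i : ι, |∑ j : Fin m, ε j * f i (x j)|) / m) := by
  rw [radE_div_const, radE_div_const, ← mul_div_assoc]
  exact div_le_div_of_nonneg_right
    (radE_iSup_abs_dotProduct_comp_le hα (fun j => hlip (y j)) (fun j => h0 (y j))
      (fun i j => f i (x j)) hb) m.cast_nonneg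

/-- for an `α`-Lipschitz loss vanishing at `0`, the empirical
Rademacher complexity of the loss class is at most `2α` times that of the
function class. -/
theorem radE_loss_contraction {X Y : Type*} {m : ℕ} {ι : Type*} [Nonempty ι]
    (ℓ : Y → ℝ → ℝ) (α : ℝ) (hα : 0 ≤ α)
    (hlip : ∀ (y : Y) (a b : ℝ), |ℓ y a - ℓ y b| ≤ α * |a - b|)
    (h0 : ∀ y : Y, ℓ y 0 = 0)
    (f : ι → X → ℝ) (x : Fin m → X) (y : Fin m → Y)
    (hb : ∀ ε : Fin m → ℝ,
      BddAbove (Set.range fun i : ι => |∑ j : Fin m, ε j * f i (x j)|)) :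
    radE m (fun ε => (⨆ i : ι, |∑ j : Fin m, ε j * ℓ (y j) (f i (x j))|) / m) ≤
      2 * α * radE m (fun ε => (⨆ i : ι, |∑ j : Fin m, ε j * f i (x j)|) / m) :=
  radE_loss_contraction_general ℓ α hα hlip h0 f x y hb
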